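/- (Lemma 14.1, local form: in the Levi-flat case transverse integrability implies complete integrability.) Assume additionally that [e_i, ē_j] = 0 for all 1 ≤ i, j ≤ p (the base structure is Levi-flat). If the family {e_1', …, e_p', ∂/∂t_1, …, ∂/∂t_d} is involutive (the deformation at constant type coded by ω is transversally integrable), then the family {e_1', …, e_p'} is also involutive (the deformation is completely integrable). -/

import Mathlib

noncomputable section
open Complex ComplexConjugate

/-- The model space `ℂ^p × ℝ^d` with foliated coordinates `(z, t)`. -/
abbrev Mdl (p d : ℕ) := (Fin p → ℂ) × (Fin d → ℝ)

/-- A complexified tangent vector, written in the frame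
`∂/∂z_i, ∂/∂z̄_i, ∂/∂t_l`: the three components are the coefficients on
`∂/∂z`, on `∂/∂z̄` and on `∂/∂t` respectively. -/
abbrev CVec (p d : ℕ) := (Fin p → ℂ) × (Fin p → ℂ) × (Fin d → ℂ)

/-- A complex vector field on (an open subset of) `ℂ^p × ℝ^d`. -/
abbrev CVF (p d : ℕ) := Mdl p d → CVec p d

variable {p d : ℕ}

/-- `∂φ/∂z_i = ½(∂φ/∂x_i − i ∂φ/∂y_i)`, via the ℂ-linear extension of the real
Fréchet derivative. -/
def pdz (i : Fin p) (φ : Mdl p d → ℂ) (u : Mdl p d) : ℂ :=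
  (1/2 : ℂ) * (fderiv ℝ φ u (Pi.single i 1, 0)
    - Complex.I * fderiv ℝ φ u (Pi.single i Complex.I, 0))

/-- `∂φ/∂z̄_i = ½(∂φ/∂x_i + i ∂φ/∂y_i)`. -/
def pdzbar (i : Fin p) (φ : Mdl p d → ℂ) (u : Mdl p d) : ℂ :=
  (1/2 : ℂ) * (fderiv ℝ φ u (Pi.single i 1, 0)
    + Complex.I * fderiv ℝ φ u (Pi.single i Complex.I, 0))

/-- `∂φ/∂t_l`. -/
def pdt (l : Fin d) (φ : Mdl p d → ℂ) (u : Mdl p d) : ℂ :=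
  fderiv ℝ φ u (0, Pi.single l 1)

/-- Derivative of a scalar function `φ` at `u` along a complexified tangent
vector `v` (the ℂ-linear extension of the real Fréchet derivative of `φ` at `u`,
applied to `v`). -/
def derivVec (v : CVec p d) (φ : Mdl p d → ℂ) (u : Mdl p d) : ℂ :=
  (∑ i, v.1 i * pdz i φ u) + (∑ i, v.2.1 i * pdzbar i φ u)
    + (∑ l, v.2.2 l * pdt l φ u)

/-- Derivative of `φ` along the complex vector field `X`: `(X·φ)(u)`. -/
def derivAlong (X : CVF p d) (φ : Mdl p d → ℂ) (u : Mdl p d) : ℂ :=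
  derivVec (X u) φ u

/-- Lie bracket of complex vector fields:
`[X, Y](u) = (D_u Y)(X(u)) − (D_u X)(Y(u))`, computed componentwise in the frame
`∂/∂z_i, ∂/∂z̄_i, ∂/∂t_l`. -/
def bracket (X Y : CVF p d) : CVF p d := fun u =>
  (fun j => derivAlong X (fun v => (Y v).1 j) u - derivAlong Y (fun v => (X v).1 j) u,
   fun j => derivAlong X (fun v => (Y v).2.1 j) u - derivAlong Y (fun v => (X v).2.1 j) u,
   fun l => derivAlong X (fun v => (Y v).2.2 l) u - derivAlong Y (fun v => (X v).2.2 l) u)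

/-- The canonical frame `e_i = ∂/∂z̄_i + Σ_l a_i^l ∂/∂t_l` (formula (3.13)). -/
def eFrame (a : Fin p → Fin d → Mdl p d → ℂ) (i : Fin p) : CVF p d :=
  fun u => (0, Pi.single i 1, fun l => a i l u)

/-- The conjugate frame `ē_i = ∂/∂z_i + Σ_l conj(a_i^l) ∂/∂t_l`. -/
def eBarFrame (a : Fin p → Fin d → Mdl p d → ℂ) (i : Fin p) : CVF p d :=
  fun u => (Pi.single i 1, 0, fun l => conj (a i l u))

/-- The coordinate vector field `∂/∂t_l`. -/
def dtField (l : Fin d) : CVF p d := fun _ => (0, 0, Pi.single l 1)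

/-- A finite family of complex vector fields is involutive on `U` if the bracket
of any two members lies, at every point of `U`, in the pointwise ℂ-linear span
of the family. -/
def InvolutiveOn {ι : Type*} (F : ι → CVF p d) (U : Set (Mdl p d)) : Prop :=
  ∀ i j, ∀ u ∈ U,
    bracket (F i) (F j) u ∈ Submodule.span ℂ (Set.range fun k => F k u)

/-- The deformation at constant type coded by `ω`:
`e_i' = e_i − Σ_j ω_{ij} ē_j`. -/
def defCT (a : Fin p → Fin d → Mdl p d → ℂ) (ω : Fin p → Fin p → Mdl p d → ℂ)
    (i : Fin p) : CVF p d :=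
  fun u => eFrame a i u - ∑ j, ω i j u • eBarFrame a j u

/-! ### Helper lemmas -/

section Helpers

variable {p d : ℕ}

/-- Evaluation of a real-linear map on a complexified tangent vector. -/
def cvApply (L : Mdl p d →L[ℝ] ℂ) (v : CVec p d) : ℂ :=
  (∑ i, v.1 i * ((1/2 : ℂ) * (L (Pi.single i 1, 0) - Complex.I * L (Pi.single i Complex.I, 0))))
  + (∑ i, v.2.1 i * ((1/2 : ℂ) * (L (Pi.single i 1, 0) + Complex.I * L (Pi.single i Complex.I, 0))))
  + (∑ l, v.2.2 l * L (0, Pi.single l 1))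

lemma derivVec_eq_cvApply (v : CVec p d) (φ : Mdl p d → ℂ) (u : Mdl p d) :
    derivVec v φ u = cvApply (fderiv ℝ φ u) v := rfl

lemma cvApply_add (L M : Mdl p d →L[ℝ] ℂ) (v : CVec p d) :
    cvApply (L + M) v = cvApply L v + cvApply M v := by
  simp only [cvApply, ContinuousLinearMap.add_apply]
  rw [Finset.sum_congr rfl (fun i _ => (by ring :
        v.1 i * ((1/2 : ℂ) * (L (Pi.single i 1, 0) + M (Pi.single i 1, 0)
            - Complex.I * (L (Pi.single i Complex.I, 0) + M (Pi.single i Complex.I, 0))))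
        = v.1 i * ((1/2 : ℂ) * (L (Pi.single i 1, 0) - Complex.I * L (Pi.single i Complex.I, 0)))
          + v.1 i * ((1/2 : ℂ) * (M (Pi.single i 1, 0) - Complex.I * M (Pi.single i Complex.I, 0))))),
      Finset.sum_congr rfl (fun i _ => (by ring :
        v.2.1 i * ((1/2 : ℂ) * (L (Pi.single i 1, 0) + M (Pi.single i 1, 0)
            + Complex.I * (L (Pi.single i Complex.I, 0) + M (Pi.single i Complex.I, 0))))
        = v.2.1 i * ((1/2 : ℂ) * (L (Pi.single i 1, 0) + Complex.I * L (Pi.single i Complex.I, 0)))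
          + v.2.1 i * ((1/2 : ℂ) * (M (Pi.single i 1, 0) + Complex.I * M (Pi.single i Complex.I, 0))))),
      Finset.sum_congr rfl (fun l _ => (by ring :
        v.2.2 l * (L (0, Pi.single l 1) + M (0, Pi.single l 1))
        = v.2.2 l * L (0, Pi.single l 1) + v.2.2 l * M (0, Pi.single l 1))),
      Finset.sum_add_distrib, Finset.sum_add_distrib, Finset.sum_add_distrib]
  ring

lemma cvApply_zero (v : CVec p d) : cvApply (0 : Mdl p d →L[ℝ] ℂ) v = 0 := by
  simp [cvApply]

lemma cvApply_smul (c : ℂ) (L : Mdl p d →L[ℝ] ℂ) (v : CVec p d) :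
    cvApply (c • L) v = c * cvApply L v := by
  simp only [cvApply, ContinuousLinearMap.smul_apply, smul_eq_mul]
  rw [Finset.sum_congr rfl (fun i _ => (by ring :
        v.1 i * ((1/2 : ℂ) * (c * L (Pi.single i 1, 0)
            - Complex.I * (c * L (Pi.single i Complex.I, 0))))
        = c * (v.1 i * ((1/2 : ℂ) * (L (Pi.single i 1, 0)
            - Complex.I * L (Pi.single i Complex.I, 0)))))),
      Finset.sum_congr rfl (fun i _ => (by ring :
        v.2.1 i * ((1/2 : ℂ) * (c * L (Pi.single i 1, 0)
            + Complex.I * (c * L (Pi.single i Complex.I, 0))))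
        = c * (v.2.1 i * ((1/2 : ℂ) * (L (Pi.single i 1, 0)
            + Complex.I * L (Pi.single i Complex.I, 0)))))),
      Finset.sum_congr rfl (fun l _ => (by ring :
        v.2.2 l * (c * L (0, Pi.single l 1)) = c * (v.2.2 l * L (0, Pi.single l 1)))),
      ← Finset.mul_sum, ← Finset.mul_sum, ← Finset.mul_sum]
  ring

lemma cvApply_neg (L : Mdl p d →L[ℝ] ℂ) (v : CVec p d) :
    cvApply (-L) v = -cvApply L v := by
  rw [show -L = (-1 : ℂ) • L from (neg_one_smul ℂ L).symm, cvApply_smul]; ring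

lemma cvApply_sub (L M : Mdl p d →L[ℝ] ℂ) (v : CVec p d) :
    cvApply (L - M) v = cvApply L v - cvApply M v := by
  rw [sub_eq_add_neg, cvApply_add, cvApply_neg, sub_eq_add_neg]

lemma cvApply_lsum {ι : Type*} (s : Finset ι) (L : ι → (Mdl p d →L[ℝ] ℂ)) (v : CVec p d) :
    cvApply (∑ m ∈ s, L m) v = ∑ m ∈ s, cvApply (L m) v := by
  classical
  induction s using Finset.induction_on with
  | empty => simp [cvApply_zero]
  | @insert _ _ h ih => rw [Finset.sum_insert h, Finset.sum_insert h, cvApply_add, ih]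

variable {φ ψ : Mdl p d → ℂ} {u : Mdl p d} {v : CVec p d}

lemma derivVec_sub (hφ : DifferentiableAt ℝ φ u) (hψ : DifferentiableAt ℝ ψ u) :
    derivVec v (fun x => φ x - ψ x) u = derivVec v φ u - derivVec v ψ u := by
  rw [derivVec_eq_cvApply, fderiv_fun_sub hφ hψ, cvApply_sub, ← derivVec_eq_cvApply,
    ← derivVec_eq_cvApply]

lemma derivVec_neg : derivVec v (fun x => -φ x) u = -derivVec v φ u := by
  rw [derivVec_eq_cvApply, fderiv_fun_neg, cvApply_neg, ← derivVec_eq_cvApply]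

lemma derivVec_const (c : ℂ) : derivVec v (fun _ => c) u = 0 := by
  rw [derivVec_eq_cvApply, fderiv_const_apply, cvApply_zero]

lemma derivVec_mul (hφ : DifferentiableAt ℝ φ u) (hψ : DifferentiableAt ℝ ψ u) :
    derivVec v (fun x => φ x * ψ x) u = φ u * derivVec v ψ u + ψ u * derivVec v φ u := by
  rw [derivVec_eq_cvApply, fderiv_fun_mul hφ hψ, cvApply_add, cvApply_smul, cvApply_smul,
    ← derivVec_eq_cvApply, ← derivVec_eq_cvApply]

lemma derivVec_fsum {ι : Type*} (s : Finset ι) (f : ι → Mdl p d → ℂ)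
    (h : ∀ m ∈ s, DifferentiableAt ℝ (f m) u) :
    derivVec v (fun x => ∑ m ∈ s, f m x) u = ∑ m ∈ s, derivVec v (f m) u := by
  rw [derivVec_eq_cvApply, fderiv_fun_sum h, cvApply_lsum]
  exact Finset.sum_congr rfl fun m _ => (derivVec_eq_cvApply v (f m) u).symm

/- linearity in the vector argument -/
lemma derivVec_vsub (w : CVec p d) :
    derivVec (v - w) φ u = derivVec v φ u - derivVec w φ u := by
  simp only [derivVec, Prod.fst_sub, Prod.snd_sub, Pi.sub_apply, sub_mul,
    Finset.sum_sub_distrib]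
  ring

lemma derivVec_vsmul (c : ℂ) (w : CVec p d) :
    derivVec (c • w) φ u = c * derivVec w φ u := by
  simp only [derivVec, Prod.smul_fst, Prod.smul_snd, Pi.smul_apply, smul_eq_mul,
    mul_assoc, ← Finset.mul_sum]
  ring

lemma derivVec_vadd (w : CVec p d) :
    derivVec (v + w) φ u = derivVec v φ u + derivVec w φ u := by
  simp only [derivVec, Prod.fst_add, Prod.snd_add, Pi.add_apply, add_mul,
    Finset.sum_add_distrib]
  ring

lemma derivVec_vsum {ι : Type*} (s : Finset ι) (w : ι → CVec p d) :
    derivVec (∑ m ∈ s, w m) φ u = ∑ m ∈ s, derivVec (w m) φ u := by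
  classical
  induction s using Finset.induction_on with
  | empty => simp [derivVec]
  | @insert _ _ h ih => rw [Finset.sum_insert h, Finset.sum_insert h, derivVec_vadd, ih]

end Helpers

section Helpers2

variable {p d : ℕ} {φ : Mdl p d → ℂ} {u : Mdl p d}

lemma fderiv_conj_apply (hφ : DifferentiableAt ℝ φ u) (w : Mdl p d) :
    fderiv ℝ (fun x => conj (φ x)) u w = conj (fderiv ℝ φ u w) := by
  have h : (fun x => conj (φ x)) = (Complex.conjCLE : ℂ ≃L[ℝ] ℂ) ∘ φ := by
    funext x; simp
  rw [h, ContinuousLinearEquiv.comp_fderiv]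
  simp

lemma pdz_conj {i : Fin p} (hφ : DifferentiableAt ℝ φ u) :
    pdz i (fun x => conj (φ x)) u = conj (pdzbar i φ u) := by
  simp only [pdz, pdzbar, fderiv_conj_apply hφ, map_mul, map_add, map_div₀, map_one,
    map_ofNat, Complex.conj_I, map_sub]
  ring

lemma pdt_conj {l : Fin d} (hφ : DifferentiableAt ℝ φ u) :
    pdt l (fun x => conj (φ x)) u = conj (pdt l φ u) :=
  fderiv_conj_apply hφ _

variable {a : Fin p → Fin d → Mdl p d → ℂ} {ω : Fin p → Fin p → Mdl p d → ℂ}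

lemma derivAlong_eFrame (i : Fin p) :
    derivAlong (eFrame a i) φ u = pdzbar i φ u + ∑ l, a i l u * pdt l φ u := by
  simp [derivAlong, derivVec, eFrame, Pi.single_apply]

lemma derivAlong_eBarFrame (k : Fin p) :
    derivAlong (eBarFrame a k) φ u = pdz k φ u + ∑ l, conj (a k l u) * pdt l φ u := by
  simp [derivAlong, derivVec, eBarFrame, Pi.single_apply]

lemma derivAlong_eBar_conj {k : Fin p} (hφ : DifferentiableAt ℝ φ u) :
    derivAlong (eBarFrame a k) (fun x => conj (φ x)) u
      = conj (derivAlong (eFrame a k) φ u) := by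
  rw [derivAlong_eBarFrame, derivAlong_eFrame, pdz_conj hφ, map_add, map_sum]
  simp [pdt_conj hφ]

lemma derivAlong_defCT (i : Fin p) :
    derivAlong (defCT a ω i) φ u = derivAlong (eFrame a i) φ u
      - ∑ m, ω i m u * derivAlong (eBarFrame a m) φ u := by
  simp only [derivAlong, defCT]
  rw [derivVec_vsub, derivVec_vsum]
  exact congrArg _ (Finset.sum_congr rfl fun m _ => derivVec_vsmul _ _)

lemma defCT_fst (i k : Fin p) :
    (defCT a ω i u).1 k = -(ω i k u) := by
  simp [defCT, eFrame, eBarFrame, Prod.fst_sub, Prod.fst_sum, Finset.sum_apply,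
    Pi.single_apply]

lemma defCT_snd1 (i : Fin p) :
    (defCT a ω i u).2.1 = Pi.single i 1 := by
  simp [defCT, eFrame, eBarFrame, Prod.snd_sub, Prod.fst_sub, Prod.snd_sum, Prod.fst_sum]

lemma defCT_t (i : Fin p) (l : Fin d) :
    (defCT a ω i u).2.2 l = a i l u - ∑ m, ω i m u * conj (a m l u) := by
  simp [defCT, eFrame, eBarFrame, Prod.snd_sub, Prod.snd_sum, Finset.sum_apply]

lemma sum_smul_eBar (γ : Fin p → ℂ) :
    (∑ k, γ k • eBarFrame a k u)
      = (γ, 0, fun l => ∑ k, γ k * conj (a k l u)) := by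
  refine Prod.ext ?_ (Prod.ext ?_ ?_)
  · funext k'
    simp [eBarFrame, Prod.fst_sum, Finset.sum_apply, Pi.single_apply]
  · simp [eBarFrame, Prod.snd_sum, Prod.fst_sum]
  · funext l
    simp [eBarFrame, Prod.snd_sum, Finset.sum_apply]

end Helpers2

/-- Lemma 14.1 of the paper, local form: in the Levi-flat case
transverse integrability implies complete integrability.
If moreover `[e_i, ē_j] = 0` for all `i, j` (the base structure is Levi-flat) and
the family `{e_1', …, e_p', ∂/∂t_1, …, ∂/∂t_d}` is involutive on `U`, then the
family `{e_1', …, e_p'}` is involutive on `U`. -/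
theorem statement14 (p d : ℕ) (hp : 1 ≤ p) (hd : 1 ≤ d)
    (U : Set (Mdl p d)) (hU : IsOpen U)
    (a : Fin p → Fin d → Mdl p d → ℂ)
    (ha : ∀ i l, ContDiffOn ℝ (⊤ : ℕ∞) (a i l) U)
    (ω : Fin p → Fin p → Mdl p d → ℂ)
    (hω : ∀ i j, ContDiffOn ℝ (⊤ : ℕ∞) (ω i j) U)
    -- the canonical frames of a completely integrable CR polarized structure
    (hee : ∀ i j : Fin p, ∀ u ∈ U, bracket (eFrame a i) (eFrame a j) u = 0)
    -- Levi-flatness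
    (hLF : ∀ i j : Fin p, ∀ u ∈ U, bracket (eFrame a i) (eBarFrame a j) u = 0)
    -- transverse integrability of the deformation coded by ω
    (hTI : InvolutiveOn (Sum.elim (defCT a ω) (dtField : Fin d → CVF p d)) U) :
    -- complete integrability of the deformation coded by ω
    InvolutiveOn (defCT a ω) U := by
  intro i j u hu
  -- differentiability facts at u
  have hd_a : ∀ (m : Fin p) (l : Fin d), DifferentiableAt ℝ (a m l) u := fun m l =>
    ((ha m l).contDiffAt (hU.mem_nhds hu)).differentiableAt (by simp)
  have hd_ω : ∀ (m k : Fin p), DifferentiableAt ℝ (ω m k) u := fun m k =>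
    ((hω m k).contDiffAt (hU.mem_nhds hu)).differentiableAt (by simp)
  have hd_ca : ∀ (m : Fin p) (l : Fin d),
      DifferentiableAt ℝ (fun v => conj (a m l v)) u := by
    intro m l
    have : (fun v => conj (a m l v)) = (Complex.conjCLE : ℂ ≃L[ℝ] ℂ) ∘ (a m l) := by
      funext v; simp
    rw [this]
    exact Complex.conjCLE.differentiableAt.comp u (hd_a m l)
  -- extraction of the hypotheses, componentwise
  have hee1 : ∀ (m k : Fin p) (l : Fin d),
      derivAlong (eFrame a m) (a k l) u = derivAlong (eFrame a k) (a m l) u := by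
    intro m k l
    have h := congrFun (congrArg (fun x : CVec p d => x.2.2) (hee m k u hu)) l
    simp only [bracket, eFrame] at h
    exact sub_eq_zero.mp h
  have hLF1 : ∀ (m k : Fin p) (l : Fin d),
      derivAlong (eFrame a m) (fun v => conj (a k l v)) u
        = derivAlong (eBarFrame a k) (a m l) u := by
    intro m k l
    have h := congrFun (congrArg (fun x : CVec p d => x.2.2) (hLF m k u hu)) l
    simp only [bracket, eFrame, eBarFrame] at h
    exact sub_eq_zero.mp h
  -- symmetry of ē_k (conj a_m) in k, m
  have hsym : ∀ (m k : Fin p) (l : Fin d),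
      derivAlong (eBarFrame a k) (fun v => conj (a m l v)) u
        = derivAlong (eBarFrame a m) (fun v => conj (a k l v)) u := by
    intro m k l
    rw [derivAlong_eBar_conj (hd_a m l), derivAlong_eBar_conj (hd_a k l), hee1 k m l]
  -- the key cancellation
  have key : ∀ l : Fin d,
      derivAlong (defCT a ω i) (a j l) u - derivAlong (defCT a ω j) (a i l) u
      = ∑ m, (ω j m u * derivAlong (defCT a ω i) (fun v => conj (a m l v)) u
            - ω i m u * derivAlong (defCT a ω j) (fun v => conj (a m l v)) u) := by
    intro l
    have hL : derivAlong (defCT a ω i) (a j l) u - derivAlong (defCT a ω j) (a i l) u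
        = ∑ m, (ω j m u * derivAlong (eFrame a i) (fun v => conj (a m l v)) u
              - ω i m u * derivAlong (eFrame a j) (fun v => conj (a m l v)) u) := by
      rw [derivAlong_defCT, derivAlong_defCT, hee1 i j l]
      rw [Finset.sum_congr rfl (fun k _ => by rw [← hLF1 j k l] :
        ∀ k ∈ Finset.univ, ω i k u * derivAlong (eBarFrame a k) (a j l) u
          = ω i k u * derivAlong (eFrame a j) (fun v => conj (a k l v)) u)]
      rw [Finset.sum_congr rfl (fun k _ => by rw [← hLF1 i k l] :
        ∀ k ∈ Finset.univ, ω j k u * derivAlong (eBarFrame a k) (a i l) u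
          = ω j k u * derivAlong (eFrame a i) (fun v => conj (a k l v)) u)]
      rw [Finset.sum_sub_distrib]
      ring
    rw [hL]
    -- now expand the RHS of the goal
    have hdd : ∑ m, ∑ k, ω j m u * (ω i k u
          * derivAlong (eBarFrame a k) (fun v => conj (a m l v)) u)
        = ∑ m, ∑ k, ω i m u * (ω j k u
          * derivAlong (eBarFrame a k) (fun v => conj (a m l v)) u) := by
      rw [Finset.sum_comm]
      refine Finset.sum_congr rfl fun m _ => Finset.sum_congr rfl fun k _ => ?_
      rw [hsym m k l]; ring
    calc
      ∑ m, (ω j m u * derivAlong (eFrame a i) (fun v => conj (a m l v)) u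
            - ω i m u * derivAlong (eFrame a j) (fun v => conj (a m l v)) u)
        = ∑ m, ((ω j m u * (derivAlong (eFrame a i) (fun v => conj (a m l v)) u
              - ∑ k, ω i k u * derivAlong (eBarFrame a k) (fun v => conj (a m l v)) u)
            - ω i m u * (derivAlong (eFrame a j) (fun v => conj (a m l v)) u
              - ∑ k, ω j k u * derivAlong (eBarFrame a k) (fun v => conj (a m l v)) u))
            + (∑ k, ω j m u * (ω i k u * derivAlong (eBarFrame a k) (fun v => conj (a m l v)) u)
              - ∑ k, ω i m u * (ω j k u * derivAlong (eBarFrame a k) (fun v => conj (a m l v)) u))) := by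
          refine Finset.sum_congr rfl fun m _ => ?_
          rw [← Finset.mul_sum, ← Finset.mul_sum]; ring
      _ = ∑ m, (ω j m u * (derivAlong (eFrame a i) (fun v => conj (a m l v)) u
              - ∑ k, ω i k u * derivAlong (eBarFrame a k) (fun v => conj (a m l v)) u)
            - ω i m u * (derivAlong (eFrame a j) (fun v => conj (a m l v)) u
              - ∑ k, ω j k u * derivAlong (eBarFrame a k) (fun v => conj (a m l v)) u)) := by
          have hzero : ∑ m : Fin p,
              (∑ k, ω j m u * (ω i k u * derivAlong (eBarFrame a k) (fun v => conj (a m l v)) u)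
              - ∑ k, ω i m u * (ω j k u * derivAlong (eBarFrame a k) (fun v => conj (a m l v)) u)) = 0 := by
            rw [Finset.sum_sub_distrib, hdd, sub_self]
          rw [Finset.sum_add_distrib, hzero, add_zero]
      _ = ∑ m, (ω j m u * derivAlong (defCT a ω i) (fun v => conj (a m l v)) u
            - ω i m u * derivAlong (defCT a ω j) (fun v => conj (a m l v)) u) := by
          refine Finset.sum_congr rfl fun m _ => ?_
          rw [derivAlong_defCT, derivAlong_defCT]
  -- expansion of the derivative of a deformed coefficient function
  have expand : ∀ (i j : Fin p) (l : Fin d),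
      derivAlong (defCT a ω i) (fun v => a j l v - ∑ m, ω j m v * conj (a m l v)) u
        = derivAlong (defCT a ω i) (a j l) u
          - ∑ m, (ω j m u * derivAlong (defCT a ω i) (fun v => conj (a m l v)) u
              + conj (a m l u) * derivAlong (defCT a ω i) (ω j m) u) := by
    intro i j l
    simp only [derivAlong]
    rw [derivVec_sub (hd_a j l) (DifferentiableAt.fun_sum fun m _ => (hd_ω j m).fun_mul (hd_ca m l)),
      derivVec_fsum _ _ (fun m _ => (hd_ω j m).fun_mul (hd_ca m l))]
    congr 1
    exact Finset.sum_congr rfl fun m _ => derivVec_mul (hd_ω j m) (hd_ca m l)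
  -- the bracket of the deformed frames, computed
  have hbr : bracket (defCT a ω i) (defCT a ω j) u
      = ∑ k, (derivAlong (defCT a ω j) (ω i k) u - derivAlong (defCT a ω i) (ω j k) u)
          • eBarFrame a k u := by
    rw [sum_smul_eBar]
    refine Prod.ext ?_ (Prod.ext ?_ ?_)
    · funext k'
      show derivAlong (defCT a ω i) (fun v => (defCT a ω j v).1 k') u
          - derivAlong (defCT a ω j) (fun v => (defCT a ω i v).1 k') u = _
      rw [show (fun v => (defCT a ω j v).1 k') = fun v => -(ω j k' v) from
            funext fun v => defCT_fst j k',
          show (fun v => (defCT a ω i v).1 k') = fun v => -(ω i k' v) from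
            funext fun v => defCT_fst i k']
      simp only [derivAlong]
      rw [derivVec_neg, derivVec_neg]
      ring
    · funext k'
      show derivAlong (defCT a ω i) (fun v => (defCT a ω j v).2.1 k') u
          - derivAlong (defCT a ω j) (fun v => (defCT a ω i v).2.1 k') u = _
      have hcj : (fun v => (defCT a ω j v).2.1 k') = (fun _ : Mdl p d => (Pi.single j 1 : Fin p → ℂ) k') := by
        funext v; exact congrFun (defCT_snd1 j) k'
      have hci : (fun v => (defCT a ω i v).2.1 k') = (fun _ : Mdl p d => (Pi.single i 1 : Fin p → ℂ) k') := by
        funext v; exact congrFun (defCT_snd1 i) k'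
      rw [hcj, hci]
      simp only [derivAlong]
      rw [derivVec_const, derivVec_const, sub_zero]
      rfl
    · funext l
      show derivAlong (defCT a ω i) (fun v => (defCT a ω j v).2.2 l) u
          - derivAlong (defCT a ω j) (fun v => (defCT a ω i v).2.2 l) u = _
      rw [show (fun v => (defCT a ω j v).2.2 l)
            = fun v => a j l v - ∑ m, ω j m v * conj (a m l v) from
            funext fun v => defCT_t j l,
          show (fun v => (defCT a ω i v).2.2 l)
            = fun v => a i l v - ∑ m, ω i m v * conj (a m l v) from
            funext fun v => defCT_t i l,
          expand i j l, expand j i l]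
      rw [show ∀ A B C D : ℂ, A - B - (C - D) = (A - C) - B + D from
            fun _ _ _ _ => by ring, key l,
        ← Finset.sum_sub_distrib, ← Finset.sum_add_distrib]
      exact Finset.sum_congr rfl fun m _ => by ring
  -- use transverse integrability
  obtain ⟨c, hc⟩ := Submodule.mem_span_range_iff_exists_fun ℂ |>.mp (hTI (Sum.inl i) (Sum.inl j) u hu)
  rw [Fintype.sum_sum_type] at hc
  simp only [Sum.elim_inl, Sum.elim_inr] at hc
  -- the `∂/∂z̄` components show that the deformed-frame coefficients vanish
  have hcl : ∀ m : Fin p, c (Sum.inl m) = 0 := by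
    intro m
    have h := congrFun (congrArg (fun x : CVec p d => x.2.1) hc) m
    simp only [hbr, sum_smul_eBar] at h
    simpa [Prod.snd_sum, Prod.fst_sum, Finset.sum_apply, defCT_snd1, dtField,
      Pi.single_apply] using h
  -- hence the `∂/∂z` components of the bracket vanish
  have hγ : ∀ k : Fin p,
      derivAlong (defCT a ω j) (ω i k) u - derivAlong (defCT a ω i) (ω j k) u = 0 := by
    intro k
    have h := congrFun (congrArg (fun x : CVec p d => x.1) hc) k
    simp only [hbr, sum_smul_eBar] at h
    simpa [Prod.fst_sum, Finset.sum_apply, defCT_fst, dtField, hcl] using h.symm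
  rw [hbr]
  have : ∀ k : Fin p,
      (derivAlong (defCT a ω j) (ω i k) u - derivAlong (defCT a ω i) (ω j k) u)
        • eBarFrame a k u = 0 := fun k => by rw [hγ k, zero_smul]
  rw [Finset.sum_congr rfl fun k _ => this k, Finset.sum_const, smul_zero]
  exact Submodule.zero_mem _
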